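/- Let Π be a family of deterministic stopping policies with VC dimension at most d (as Boolean classifiers on List O), d ≥ 1, and let g : List O → ℝ be a reward function. For π ∈ Π and Δ ∈ ℝ, let I(π, Δ) be the Boolean function on full trajectories defined by I(π, Δ)(x) = true iff R_π(x) ≥ Δ. Then for any n full trajectories x₁, …, xₙ of horizon H with n·H ≥ d, the number of distinct Boolean labeling vectors { (I(π,Δ)(x₁), …, I(π,Δ)(xₙ)) : π ∈ Π, Δ ∈ ℝ } is at most (n·H + 1)·(e·n·H/d)^d. -/

import Mathlib

open scoped BigOperators

/-- The `t`-prefix of a full trajectory `x : Fin H → O`, i.e. the list `[x 0, …, x (t-1)]`. -/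
def trajPrefix {O : Type*} {H : ℕ} (x : Fin H → O) (t : ℕ) : List O :=
  (List.ofFn x).take t

open Classical in
/-- The stopping time of policy `π` on full trajectory `x`: the least `t` with
`1 ≤ t ≤ H` such that `π` halts on the `t`-prefix of `x`, and `H` if no such `t` exists. -/
noncomputable def stopTime {O : Type*} (H : ℕ) (π : List O → Bool) (x : Fin H → O) : ℕ :=
  if h : ∃ t, (1 ≤ t ∧ t ≤ H) ∧ π (trajPrefix x t) = true then Nat.find h else H

/-- The return of policy `π` on full trajectory `x` under reward function `g`. -/
noncomputable def policyReturn {O : Type*} {H : ℕ} (g : List O → ℝ) (π : List O → Bool)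
    (x : Fin H → O) : ℝ :=
  g (trajPrefix x (stopTime H π x))

/-- A family `Π` of policies shatters a finite set `S` of lists if every Boolean
labeling of `S` is realized by some member of `Π`. -/
def ShattersLists {O : Type*} (P : Set (List O → Bool)) (S : Finset (List O)) : Prop :=
  ∀ f : List O → Bool, ∃ π ∈ P, ∀ l ∈ S, π l = f l

/-!
The return of `π` on `x i` only depends on the values of `π` on the `n * H` prefixes of the
trajectories, so the labeling vectors realised by `π` depend only on the trace of `π` on that set
`T` of prefixes. By the Sauer–Shelah lemma there are at most `∑_{k ≤ d} (n * H).choose k ≤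
(e * n * H / d) ^ d` traces, and for a fixed vector of returns the threshold labelings
`i ↦ (Δ ≤ r i)` form a chain, so there are at most `n + 1` of them.
-/

open Finset

lemma Finset.card_le_sum_range_choose_of_not_shatters {α : Type*} [DecidableEq α]
    {𝒜 : Finset (Finset α)} {T : Finset α} {d : ℕ} (h𝒜T : ∀ s ∈ 𝒜, s ⊆ T)
    (h𝒜 : ∀ s : Finset α, #s = d + 1 → ¬ 𝒜.Shatters s) :
    #𝒜 ≤ ∑ k ∈ range (d + 1), (#T).choose k := by
  have hshatterer : 𝒜.shatterer ⊆ (range (d + 1)).biUnion (T.powersetCard ·) := by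
    intro s hs
    rw [mem_shatterer] at hs
    obtain ⟨u, hu, hsu⟩ := hs.exists_superset
    have hcard : #s ≤ d := by
      by_contra! hlt
      obtain ⟨t, hts, htcard⟩ := exists_subset_card_eq (s := s) (n := d + 1) hlt
      exact h𝒜 t htcard (hs.mono_right hts)
    exact mem_biUnion.2
      ⟨#s, mem_range.2 (by omega), mem_powersetCard.2 ⟨hsu.trans (h𝒜T u hu), rfl⟩⟩
  calc #𝒜 ≤ #𝒜.shatterer := card_le_card_shatterer 𝒜
    _ ≤ #((range (d + 1)).biUnion (T.powersetCard ·)) := card_le_card hshatterer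
    _ ≤ ∑ k ∈ range (d + 1), #(T.powersetCard k) := card_biUnion_le
    _ = ∑ k ∈ range (d + 1), (#T).choose k := by simp only [card_powersetCard]

/- With `q = d / m ≤ 1`, the partial binomial sum weighted by `q ^ d` is at most
`(1 + q) ^ m ≤ exp (m * q) = exp d`. -/
open Real in
lemma sum_range_choose_le_exp_mul_div_pow {m d : ℕ} (hdm : d ≤ m) :
    (∑ k ∈ range (d + 1), (m.choose k : ℝ)) ≤ (exp 1 * m / d) ^ d := by
  rcases d.eq_zero_or_pos with rfl | hd
  · simp
  have hm : 0 < m := hd.trans_le hdm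
  set q : ℝ := d / m
  have hq0 : 0 < q := by positivity
  have hq1 : q ≤ 1 := div_le_one_of_le₀ (by exact_mod_cast hdm) m.cast_nonneg
  have hbinom : (∑ k ∈ range (d + 1), (m.choose k : ℝ)) * q ^ d ≤ (1 + q) ^ m :=
    calc (∑ k ∈ range (d + 1), (m.choose k : ℝ)) * q ^ d
        ≤ ∑ k ∈ range (d + 1), (m.choose k : ℝ) * q ^ k := by
          rw [sum_mul]
          refine sum_le_sum fun k hk ↦ mul_le_mul_of_nonneg_left ?_ (by positivity)
          exact pow_le_pow_of_le_one hq0.le hq1 (Nat.lt_succ_iff.1 (mem_range.1 hk))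
      _ ≤ ∑ k ∈ range (m + 1), (m.choose k : ℝ) * q ^ k :=
          sum_le_sum_of_subset_of_nonneg (range_subset_range.2 (by omega))
            fun _ _ _ ↦ by positivity
      _ = (1 + q) ^ m := by rw [add_comm 1 q, add_pow]; simp only [one_pow, mul_one, mul_comm]
  have hexp : (1 + q) ^ m ≤ exp 1 ^ d :=
    calc (1 + q) ^ m ≤ exp q ^ m := by gcongr; linarith [add_one_le_exp q]
      _ = exp 1 ^ d := by
        rw [← exp_nat_mul, ← exp_nat_mul, mul_one, mul_div_cancel₀ _ (by positivity)]
  calc (∑ k ∈ range (d + 1), (m.choose k : ℝ)) ≤ exp 1 ^ d / q ^ d :=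
        (le_div_iff₀ (by positivity)).2 (hbinom.trans hexp)
    _ = (exp 1 * m / d) ^ d := by rw [← div_pow, div_div_eq_mul_div]

section Thresholds

variable {ι β : Type*} [LinearOrder β]

def thresholdLabelings (r : ι → β) : Set (ι → Bool) :=
  {v | ∃ Δ : β, ∀ i, v i = true ↔ Δ ≤ r i}

lemma le_or_le_of_mem_thresholdLabelings {r : ι → β} {v w : ι → Bool}
    (hv : v ∈ thresholdLabelings r) (hw : w ∈ thresholdLabelings r) : v ≤ w ∨ w ≤ v := by
  obtain ⟨Δ, hΔ⟩ := hv
  obtain ⟨Δ', hΔ'⟩ := hw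
  rcases le_total Δ' Δ with h | h
  · exact .inl fun i ↦ Bool.le_iff_imp.2 fun hi ↦ (hΔ' i).2 (h.trans ((hΔ i).1 hi))
  · exact .inr fun i ↦ Bool.le_iff_imp.2 fun hi ↦ (hΔ i).2 (h.trans ((hΔ' i).1 hi))

lemma eq_of_le_of_card_filter_eq [Fintype ι] {v w : ι → Bool} (hvw : v ≤ w)
    (hcard : #{i | v i = true} = #{i | w i = true}) : v = w := by
  have hsub : ({i | v i = true} : Finset ι) ⊆ ({i | w i = true} : Finset ι) := by
    intro i
    simpa using Bool.le_iff_imp.1 (hvw i)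
  have hset := eq_of_subset_of_card_le hsub hcard.ge
  funext i
  simpa using congr(i ∈ $hset)

lemma ncard_thresholdLabelings_le [Fintype ι] (r : ι → β) :
    (thresholdLabelings r).ncard ≤ Fintype.card ι + 1 := by
  have hinj : Set.InjOn (fun v : ι → Bool ↦ #{i | v i = true}) (thresholdLabelings r) := by
    intro v hv w hw hcard
    rcases le_or_le_of_mem_thresholdLabelings hv hw with h | h
    · exact eq_of_le_of_card_filter_eq h hcard
    · exact (eq_of_le_of_card_filter_eq h hcard.symm).symm
  calc (thresholdLabelings r).ncard ≤ (Set.Iio (Fintype.card ι + 1)).ncard :=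
        Set.ncard_le_ncard_of_injOn _ (fun v _ ↦ Nat.lt_succ_of_le (card_filter_le _ _)) hinj
          (Set.finite_Iio _)
    _ = Fintype.card ι + 1 := by simp

end Thresholds

section Traces

variable {α : Type*} {P : Set (α → Bool)} {T : Finset α}

open Classical in
noncomputable def traceFamily (P : Set (α → Bool)) (T : Finset α) : Finset (Finset α) :=
  T.powerset.filter fun s ↦ ∃ π ∈ P, T.filter (π · = true) = s

lemma mem_traceFamily {s : Finset α} :
    s ∈ traceFamily P T ↔ ∃ π ∈ P, T.filter (π · = true) = s := by
  classical
  simp only [traceFamily, mem_filter, mem_powerset, and_iff_right_iff_imp]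
  rintro ⟨π, -, rfl⟩
  exact filter_subset _ _

variable [DecidableEq α]

lemma exists_mem_eqOn_of_shatters_traceFamily {S : Finset α}
    (hS : (traceFamily P T).Shatters S) (f : α → Bool) :
    ∃ π ∈ P, ∀ a ∈ S, π a = f a := by
  obtain ⟨u, hu, hSu⟩ := hS (filter_subset (f · = true) S)
  obtain ⟨π, hπ, rfl⟩ := mem_traceFamily.1 hu
  have hST : S ⊆ T := fun a ha ↦ by
    obtain ⟨t, ht, hSt⟩ := hS.exists_superset
    obtain ⟨π', -, rfl⟩ := mem_traceFamily.1 ht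
    exact (mem_filter.1 (hSt ha)).1
  refine ⟨π, hπ, fun a ha ↦ Bool.eq_iff_iff.2 ?_⟩
  simpa [ha, hST ha] using congr(a ∈ $hSu)

lemma card_traceFamily_le_sum_range_choose {d : ℕ}
    (hP : ∀ S : Finset α, #S = d + 1 →
      ¬ ∀ f : α → Bool, ∃ π ∈ P, ∀ a ∈ S, π a = f a) :
    #(traceFamily P T) ≤ ∑ k ∈ range (d + 1), (#T).choose k := by
  refine card_le_sum_range_choose_of_not_shatters (fun s hs ↦ ?_) fun S hS hshat ↦
    hP S hS (exists_mem_eqOn_of_shatters_traceFamily hshat)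
  obtain ⟨π, -, rfl⟩ := mem_traceFamily.1 hs
  exact filter_subset _ _

end Traces

lemma ncard_setOf_mem_thresholdLabelings_le {α ι β : Type*} [Fintype ι] [LinearOrder β]
    (P : Set (α → Bool)) (T : Finset α) (R : (α → Bool) → ι → β)
    (hR : ∀ π ∈ P, ∀ π' ∈ P, (∀ a ∈ T, π a = π' a) → R π = R π') :
    {v | ∃ π ∈ P, v ∈ thresholdLabelings (R π)}.ncard
      ≤ #(traceFamily P T) * (Fintype.card ι + 1) := by
  classical
  choose! rep hrepP hrep using fun s (hs : s ∈ traceFamily P T) ↦ mem_traceFamily.1 hs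
  have hsub : {v | ∃ π ∈ P, v ∈ thresholdLabelings (R π)}
      ⊆ ⋃ s ∈ traceFamily P T, thresholdLabelings (R (rep s)) := by
    rintro v ⟨π, hπ, hv⟩
    have hs : T.filter (π · = true) ∈ traceFamily P T := mem_traceFamily.2 ⟨π, hπ, rfl⟩
    have hagree : ∀ a ∈ T, rep _ a = π a := fun a ha ↦
      Bool.eq_iff_iff.2 (filter_inj'.1 (hrep _ hs) ha)
    exact Set.mem_biUnion hs (hR _ (hrepP _ hs) π hπ hagree ▸ hv)
  calc _ ≤ (⋃ s ∈ traceFamily P T, thresholdLabelings (R (rep s))).ncard :=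
        Set.ncard_le_ncard hsub (Set.toFinite _)
    _ ≤ ∑ s ∈ traceFamily P T, (thresholdLabelings (R (rep s))).ncard :=
        set_ncard_biUnion_le _ _
    _ ≤ ∑ _s ∈ traceFamily P T, (Fintype.card ι + 1) :=
        sum_le_sum fun _ _ ↦ ncard_thresholdLabelings_le _
    _ = #(traceFamily P T) * (Fintype.card ι + 1) := by rw [sum_const, smul_eq_mul]

lemma stopTime_congr {O : Type*} {H : ℕ} {π π' : List O → Bool} {x : Fin H → O}
    (h : ∀ t ∈ Icc 1 H, π (trajPrefix x t) = π' (trajPrefix x t)) :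
    stopTime H π x = stopTime H π' x := by
  have hiff : ∀ t, ((1 ≤ t ∧ t ≤ H) ∧ π (trajPrefix x t) = true) ↔
      ((1 ≤ t ∧ t ≤ H) ∧ π' (trajPrefix x t) = true) := fun t ↦
    and_congr_right fun ht ↦ by rw [h t (mem_Icc.2 ht)]
  unfold stopTime
  split_ifs with hπ hπ' hπ'
  · exact Nat.find_congr' (hiff _)
  · exact absurd (hπ.imp fun t ↦ (hiff t).1) hπ'
  · exact absurd (hπ'.imp fun t ↦ (hiff t).2) hπ
  · rfl

lemma policyReturn_congr {O : Type*} {H : ℕ} (g : List O → ℝ) {π π' : List O → Bool}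
    {x : Fin H → O} (h : ∀ t ∈ Icc 1 H, π (trajPrefix x t) = π' (trajPrefix x t)) :
    policyReturn g π x = policyReturn g π' x := by
  rw [policyReturn, policyReturn, stopTime_congr h]

theorem indicator_labelings_card_le_general {O : Type*} {H n d : ℕ} (hH : 1 ≤ H)
    (P : Set (List O → Bool))
    (hVC : ∀ S : Finset (List O), S.card = d + 1 → ¬ ShattersLists P S)
    (g : List O → ℝ)
    (x : Fin n → (Fin H → O)) (hnH : d ≤ n * H) :
    ((Set.ncard {v : Fin n → Bool | ∃ π ∈ P, ∃ Δ : ℝ,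
        ∀ i : Fin n, (v i = true ↔ Δ ≤ policyReturn g π (x i))} : ℝ))
      ≤ ((n : ℝ) * H + 1) * (Real.exp 1 * n * H / d) ^ d := by
  classical
  set T := univ.biUnion fun i ↦ (Icc 1 H).image (trajPrefix (x i))
  have hT : #T ≤ n * H := by
    calc #T ≤ #(univ : Finset (Fin n)) * H :=
          card_biUnion_le_card_mul _ _ _ fun _ _ ↦ card_image_le.trans (by simp)
      _ = n * H := by simp
  have hcount := ncard_setOf_mem_thresholdLabelings_le P T (fun π i ↦ policyReturn g π (x i))
    fun π _ π' _ h ↦ funext fun i ↦ policyReturn_congr g fun t ht ↦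
      h _ (mem_biUnion.2 ⟨i, mem_univ i, mem_image_of_mem _ ht⟩)
  have htraces := card_traceFamily_le_sum_range_choose (T := T) hVC
  have hchoose :
      ∑ k ∈ range (d + 1), (#T).choose k ≤ ∑ k ∈ range (d + 1), (n * H).choose k :=
    sum_le_sum fun k _ ↦ Nat.choose_le_choose k hT
  have hn : (n : ℝ) + 1 ≤ n * H + 1 := by
    gcongr
    exact le_mul_of_one_le_right n.cast_nonneg (by exact_mod_cast hH)
  calc _ ≤ (((∑ k ∈ range (d + 1), (n * H).choose k) * (n + 1) : ℕ) : ℝ) := by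
        rw [Fintype.card_fin] at hcount
        exact_mod_cast hcount.trans (Nat.mul_le_mul_right _ (htraces.trans hchoose))
    _ ≤ (Real.exp 1 * (n * H : ℕ) / d) ^ d * (n * H + 1) := by
        push_cast
        gcongr
        exact_mod_cast sum_range_choose_le_exp_mul_div_pow hnH
    _ = _ := by push_cast; ring

/-- The number of distinct Boolean labeling vectors produced by the indicator class
`I(π, Δ)(x) = (R_π(x) ≥ Δ)` on `n` full trajectories is at most `(n·H + 1)·(e·n·H/d)^d`. -/
theorem indicator_labelings_card_le {O : Type*} {H n d : ℕ} (hH : 1 ≤ H) (hd : 1 ≤ d)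
    (P : Set (List O → Bool))
    (hVC : ∀ S : Finset (List O), S.card = d + 1 → ¬ ShattersLists P S)
    (g : List O → ℝ)
    (x : Fin n → (Fin H → O)) (hnH : d ≤ n * H) :
    ((Set.ncard {v : Fin n → Bool | ∃ π ∈ P, ∃ Δ : ℝ,
        ∀ i : Fin n, (v i = true ↔ Δ ≤ policyReturn g π (x i))} : ℝ))
      ≤ ((n : ℝ) * H + 1) * (Real.exp 1 * n * H / d) ^ d :=
  indicator_labelings_card_le_general hH P hVC g x hnH
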